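/- arXiv:1008.0211 — 5 statements merged into one kernel-verified Lean document; each statement's English description precedes it below -/
import Mathlib

section
/- Let c : ℝ → ℝ be twice continuously differentiable, and let Π, K⁰, K¹ : ℝ³ → ℝ (arguments (t, x, u)) be continuously differentiable with ∂K¹/∂u (t,x,u) = c'(u) · ∂K⁰/∂u (t,x,u) for all (t,x,u). Define Q(t,x,u) = (∂K⁰/∂u)(t,x,u) · Π(t,x,u) + (∂K⁰/∂t)(t,x,u) + (∂K¹/∂x)(t,x,u). Then every differentiable u : ℝ² → ℝ satisfying ∂_t u + ∂_x( c(u(t,x)) ) = Π(t, x, u(t,x)) also satisfies ∂_t( K⁰(t, x, u(t,x)) ) + ∂_x( K¹(t, x, u(t,x)) ) = Q(t, x, u(t,x)) for all (t,x). -/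
/-! Along a solution, the chain rule splits `d_t K⁰ + d_x K¹` into the explicit partial derivatives
`∂_t K⁰ + ∂_x K¹` plus `u_t ∂_u K⁰ + u_x ∂_u K¹`. The flux condition turns the latter into
`∂_u K⁰ · (u_t + c'(u) u_x) = ∂_u K⁰ · Π`. -/

theorem deriv_comp_prodMk {G : ℝ × ℝ → ℝ} {v : ℝ → ℝ} {t : ℝ}
    (hG : DifferentiableAt ℝ G (t, v t)) (hv : DifferentiableAt ℝ v t) :
    deriv (fun s => G (s, v s)) t =
      deriv (fun s => G (s, v t)) t + deriv v t * deriv (fun w => G (t, w)) (v t) := by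
  set L := fderiv ℝ G (t, v t)
  have h_total : HasDerivAt (fun s => G (s, v s)) (L (1, deriv v t)) t :=
    hG.hasFDerivAt.comp_hasDerivAt t ((hasDerivAt_id t).prodMk hv.hasDerivAt)
  have h_first : HasDerivAt (fun s => G (s, v t)) (L (1, 0)) t :=
    hG.hasFDerivAt.comp_hasDerivAt t ((hasDerivAt_id t).prodMk (hasDerivAt_const t (v t)))
  have h_second : HasDerivAt (fun w => G (t, w)) (L (0, 1)) (v t) :=
    hG.hasFDerivAt.comp_hasDerivAt (v t) ((hasDerivAt_const (v t) t).prodMk (hasDerivAt_id (v t)))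
  have h_split : ((1 : ℝ), deriv v t) = ((1 : ℝ), (0 : ℝ)) + deriv v t • ((0 : ℝ), (1 : ℝ)) := by
    simp
  rw [h_total.deriv, h_first.deriv, h_second.deriv, h_split, map_add, map_smul, smul_eq_mul]

theorem stmt_9_general (c : ℝ → ℝ) (hc : ContDiff ℝ 2 c)
    (P K0 K1 : ℝ × ℝ × ℝ → ℝ)
    (hK0 : ContDiff ℝ 1 K0) (hK1 : ContDiff ℝ 1 K1)
    (hflux : ∀ t x u, deriv (fun u' => K1 (t, x, u')) u =
      deriv c u * deriv (fun u' => K0 (t, x, u')) u)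
    (u : ℝ × ℝ → ℝ) (hu : Differentiable ℝ u)
    (hsol : ∀ t x, deriv (fun s => u (s, x)) t + deriv (fun y => c (u (t, y))) x =
      P (t, x, u (t, x))) :
    ∀ t x,
      deriv (fun s => K0 (s, x, u (s, x))) t + deriv (fun y => K1 (t, y, u (t, y))) x =
        deriv (fun u' => K0 (t, x, u')) (u (t, x)) * P (t, x, u (t, x)) +
        deriv (fun t' => K0 (t', x, u (t, x))) t +
        deriv (fun x' => K1 (t, x', u (t, x))) x := by
  intro t x
  have hK0_diff := hK0.differentiable one_ne_zero
  have hK1_diff := hK1.differentiable one_ne_zero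
  have hu_t : DifferentiableAt ℝ (fun s => u (s, x)) t := by fun_prop
  have hu_x : DifferentiableAt ℝ (fun y => u (t, y)) x := by fun_prop
  have h_dt : deriv (fun s => K0 (s, x, u (s, x))) t = deriv (fun s => K0 (s, x, u (t, x))) t +
      deriv (fun s => u (s, x)) t * deriv (fun w => K0 (t, x, w)) (u (t, x)) :=
    deriv_comp_prodMk (G := fun q => K0 (q.1, x, q.2)) (by fun_prop) hu_t
  have h_dx : deriv (fun y => K1 (t, y, u (t, y))) x = deriv (fun y => K1 (t, y, u (t, x))) x +
      deriv (fun y => u (t, y)) x * deriv (fun w => K1 (t, x, w)) (u (t, x)) :=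
    deriv_comp_prodMk (G := fun q => K1 (t, q.1, q.2)) (by fun_prop) hu_x
  have h_dc : deriv (fun y => c (u (t, y))) x = deriv c (u (t, x)) * deriv (fun y => u (t, y)) x :=
    deriv_comp (h₂ := c) x ((hc.differentiable two_ne_zero) _) hu_x
  rw [h_dt, h_dx, hflux, ← hsol t x, h_dc]
  ring

/-- supplementary balance laws for the scalar balance equation
`u_t + (c(u))_x = Π(t,x,u)` in (1+1)-dimensional space-time.  If
`∂K¹/∂u = c'(u) ∂K⁰/∂u`, then along every differentiable solution `u(t,x)` one has
`d_t K⁰ + d_x K¹ = Q` with `Q = (∂K⁰/∂u)Π + ∂K⁰/∂t + ∂K¹/∂x`. -/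
theorem stmt_9 (c : ℝ → ℝ) (hc : ContDiff ℝ 2 c)
    (P K0 K1 : ℝ × ℝ × ℝ → ℝ)
    (hP : ContDiff ℝ 1 P) (hK0 : ContDiff ℝ 1 K0) (hK1 : ContDiff ℝ 1 K1)
    (hflux : ∀ t x u, deriv (fun u' => K1 (t, x, u')) u =
      deriv c u * deriv (fun u' => K0 (t, x, u')) u)
    (u : ℝ × ℝ → ℝ) (hu : Differentiable ℝ u)
    (hsol : ∀ t x, deriv (fun s => u (s, x)) t + deriv (fun y => c (u (t, y))) x =
      P (t, x, u (t, x))) :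
    ∀ t x,
      deriv (fun s => K0 (s, x, u (s, x))) t + deriv (fun y => K1 (t, y, u (t, y))) x =
        deriv (fun u' => K0 (t, x, u')) (u (t, x)) * P (t, x, u (t, x)) +
        deriv (fun t' => K0 (t', x, u (t, x))) t +
        deriv (fun x' => K1 (t, x', u (t, x))) x :=
  stmt_9_general c hc P K0 K1 hK0 hK1 hflux u hu hsol
end

section
/- Let a, b, c ∈ ℝ with (a, b, c) ≠ (0, 0, 0), and let H be a real symmetric 2 × 2 matrix that is positive definite or negative definite and satisfies a·H₁₁ + 2b·H₁₂ + c·H₂₂ = 0. Then the determinant of the matrix J = [[a, b], [b, c]] is negative: ac − b² < 0. -/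
/-!
The expression `a p + 2 b q + c r` is the trace pairing `tr (J H)` of `J = [[a, b], [b, c]]` with
`H = [[p, q], [q, r]]`. If `b² ≤ a c`, squaring `a p + c r = -2 b q` and comparing with
`(a p + c r)² ≥ 4 a c p r` gives `a c (p r - q²) ≤ 0`; for definite `H` this forces `a c = 0`,
hence `b = 0`, and then `a p + c r = 0` with `p, r > 0` forces `a = c = 0`.
-/

theorem mul_sub_sq_neg_of_trace_pairing_eq_zero {a b c p q r : ℝ} (hp : 0 < p) (hr : 0 < r)
    (hq : q ^ 2 < p * r) (habc : (a, b, c) ≠ (0, 0, 0)) (h : a * p + 2 * b * q + c * r = 0) :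
    a * c - b ^ 2 < 0 := by
  by_contra! hJ
  have hac : 0 ≤ a * c := by nlinarith [sq_nonneg b]
  have hsq : (a * p + c * r) ^ 2 = 4 * b ^ 2 * q ^ 2 := by
    rw [show a * p + c * r = -(2 * b * q) by linarith]; ring
  have hkey : a * c * (p * r - q ^ 2) ≤ 0 := by
    nlinarith [sq_nonneg (a * p - c * r), mul_le_mul_of_nonneg_right hJ (sq_nonneg q)]
  have hac0 : a * c = 0 :=
    le_antisymm (nonpos_of_mul_nonpos_left hkey (sub_pos.2 hq)) hac
  have hb : b = 0 := by nlinarith [sq_nonneg b]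
  have hsum : a * p + c * r = 0 := by simpa [hb] using h
  have ha : a = 0 := by
    have : (a * p) ^ 2 = 0 := by linear_combination a * p * hsum - p * r * hac0
    simpa [hp.ne'] using this
  have hc : c = 0 := by
    have : (c * r) ^ 2 = 0 := by linear_combination c * r * hsum - p * r * hac0
    simpa [hr.ne'] using this
  exact habc (by rw [ha, hb, hc])

theorem Matrix.PosDef.sq_apply_zero_one_lt {H : Matrix (Fin 2) (Fin 2) ℝ} (hH : H.PosDef) :
    H 0 1 ^ 2 < H 0 0 * H 1 1 := by
  have hdet := hH.det_pos
  have hsymm : H 1 0 = H 0 1 := by simpa using hH.isHermitian.apply 0 1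
  rw [Matrix.det_fin_two, hsymm] at hdet
  linarith

theorem mul_sub_sq_neg_of_posDef {a b c : ℝ} (habc : (a, b, c) ≠ (0, 0, 0))
    {H : Matrix (Fin 2) (Fin 2) ℝ} (hH : H.PosDef)
    (heq : a * H 0 0 + 2 * b * H 0 1 + c * H 1 1 = 0) :
    a * c - b ^ 2 < 0 :=
  mul_sub_sq_neg_of_trace_pairing_eq_zero hH.diag_pos hH.diag_pos hH.sq_apply_zero_one_lt habc heq

theorem stmt_11_general (a b c : ℝ) (habc : (a, b, c) ≠ (0, 0, 0))
    (H : Matrix (Fin 2) (Fin 2) ℝ)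
    (hdef : H.PosDef ∨ (-H).PosDef)
    (heq : a * H 0 0 + 2 * b * H 0 1 + c * H 1 1 = 0) :
    a * c - b ^ 2 < 0 := by
  rcases hdef with hH | hH
  · exact mul_sub_sq_neg_of_posDef habc hH heq
  · refine mul_sub_sq_neg_of_posDef habc hH ?_
    simp only [Matrix.neg_apply]
    linarith

/-- if `(a,b,c) ≠ (0,0,0)` and a symmetric `2×2` matrix `H` which is
positive definite or negative definite satisfies `a H₁₁ + 2b H₁₂ + c H₂₂ = 0`, then
`det [[a,b],[b,c]] = ac − b² < 0` (hyperbolicity of the defining equation). -/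
theorem stmt_11 (a b c : ℝ) (habc : (a, b, c) ≠ (0, 0, 0))
    (H : Matrix (Fin 2) (Fin 2) ℝ) (hsymm : H 0 1 = H 1 0)
    (hdef : H.PosDef ∨ (-H).PosDef)
    (heq : a * H 0 0 + 2 * b * H 0 1 + c * H 1 1 = 0) :
    a * c - b ^ 2 < 0 :=
  stmt_11_general a b c habc H hdef heq
end

section
/- Let Λ̃ : ℝ → ℝ be continuously differentiable with Λ̃'(ẽ) ≠ 0 for every ẽ, and let h : ℝ × ℝ³ → ℝ (arguments (ẽ, q¹, q², q³)) be twice continuously differentiable satisfying, at every point: ∂²h/∂q^A∂q^B = 0 for all A ≠ B; ∂²h/∂q^B∂ẽ = 0 for all B; and ∂²h/∂ẽ² = Λ̃'(ẽ) · ∂²h/∂(q^B)² for every B = 1,2,3. Then there exist constants α, c, d ∈ ℝ and β ∈ ℝ³ such that h(ẽ, q) = 2α ∫₀^{ẽ} Λ̃(s) ds + α‖q‖² + c·ẽ + Σ_A β_A q^A + d for all (ẽ, q), where ‖q‖² = Σ_A (q^A)². -/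
/-!
By the symmetry of second derivatives, `∂²h/∂ẽ∂q^B = 0`, so `∂h/∂ẽ` does not depend on `q` and
`∂h/∂q^B` does not depend on `ẽ`. Hence `∂²h/∂ẽ²(ẽ, q) = ∂²h/∂ẽ²(ẽ, 0)` and
`∂²h/∂(q^B)²(ẽ, q) = ∂²h/∂(q^B)²(0, q)`, and the third equation at `ẽ = 0` forces
`∂²h/∂(q^B)² ≡ κ := ∂²h/∂ẽ²(0) / Λ̃'(0)`. Then `∂h/∂ẽ - κ Λ̃(ẽ)`, `∂h/∂q^B - κ q^B` and finally
`h - κ (∫₀^ẽ Λ̃ + ‖q‖² / 2)` minus a linear function all have vanishing derivative, so each is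
constant; the theorem holds with `α = κ / 2`.
-/

section General

variable {E F : Type*} [NormedAddCommGroup E] [NormedSpace ℝ E]
  [NormedAddCommGroup F] [NormedSpace ℝ F]

lemma exists_eq_add_of_fderiv_eq {f g : E → F} (hf : Differentiable ℝ f)
    (hg : Differentiable ℝ g) (hfg : ∀ x, fderiv ℝ f x = fderiv ℝ g x) :
    ∃ a, ∀ x, f x = g x + a := by
  obtain ⟨a, ha⟩ := isOpen_univ.exists_eq_add_of_fderiv_eq isPreconnected_univ
    hf.differentiableOn hg.differentiableOn fun x _ ↦ hfg x
  exact ⟨a, fun x ↦ ha (Set.mem_univ x)⟩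

lemma add_smul_eq_of_fderiv_apply_eq_zero {f : E → F} (hf : Differentiable ℝ f) {v : E}
    (hv : ∀ x, fderiv ℝ f x v = 0) (x : E) (t : ℝ) : f (x + t • v) = f x := by
  have hline : ∀ s : ℝ, HasDerivAt (fun s : ℝ ↦ f (x + s • v)) 0 s := fun s ↦ by
    have hpath : HasDerivAt (fun s : ℝ ↦ x + s • v) v s := by
      simpa using ((hasDerivAt_id s).smul_const v).const_add x
    have := (hf (x + s • v)).hasFDerivAt.comp_hasDerivAt s hpath
    rwa [hv] at this
  simpa using is_const_of_deriv_eq_zero (fun s ↦ (hline s).differentiableAt)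
    (fun s ↦ (hline s).deriv) t 0

lemma fderiv_add_eq_of_forall_add_eq {f : E → F} {a : E} (ha : ∀ x, f (x + a) = f x)
    (x : E) : fderiv ℝ f (x + a) = fderiv ℝ f x := by
  rw [← fderiv_comp_add_right, funext ha]

lemma ContDiff.differentiable_fderiv_apply {f : E → F} (hf : ContDiff ℝ 2 f) (w : E) :
    Differentiable ℝ fun z ↦ fderiv ℝ f z w :=
  ((hf.fderiv_right (m := 1) (by norm_num)).differentiable (by norm_num)).clm_apply
    (differentiable_const w)

lemma ContDiff.fderiv_fderiv_apply_comm {f : E → F} (hf : ContDiff ℝ 2 f) (x v w : E) :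
    fderiv ℝ (fun z ↦ fderiv ℝ f z w) x v = fderiv ℝ (fun z ↦ fderiv ℝ f z v) x w := by
  have hd : Differentiable ℝ (fderiv ℝ f) :=
    (hf.fderiv_right (m := 1) (by norm_num)).differentiable (by norm_num)
  simp only [fderiv_clm_apply (hd x) (differentiableAt_const _), fderiv_const_apply,
    ContinuousLinearMap.comp_zero, zero_add, ContinuousLinearMap.flip_apply]
  exact (hf.contDiffAt.isSymmSndFDerivAt (by simp)) v w

end General

section Coordinates

variable {n : ℕ} {F : Type*} [NormedAddCommGroup F] [NormedSpace ℝ F]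

lemma ContinuousLinearMap.ext_prod_single {L₁ L₂ : ℝ × (Fin n → ℝ) →L[ℝ] F}
    (h₁ : L₁ (1, 0) = L₂ (1, 0)) (h₂ : ∀ i, L₁ (0, Pi.single i 1) = L₂ (0, Pi.single i 1)) :
    L₁ = L₂ := by
  refine ContinuousLinearMap.prod_ext (ContinuousLinearMap.ext_ring h₁) ?_
  refine ContinuousLinearMap.coe_injective (LinearMap.pi_ext' fun i ↦ LinearMap.ext_ring ?_)
  simpa using h₂ i

lemma ContinuousLinearMap.map_zero_prod_eq_zero {L : ℝ × (Fin n → ℝ) →L[ℝ] F}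
    (h : ∀ i, L (0, Pi.single i 1) = 0) (q : Fin n → ℝ) : L (0, q) = 0 := by
  have hinr : L.comp (ContinuousLinearMap.inr ℝ ℝ (Fin n → ℝ)) = 0 :=
    ContinuousLinearMap.coe_injective <|
      LinearMap.pi_ext' fun i ↦ LinearMap.ext_ring (by simpa using h i)
  simpa using congrArg (· q) hinr

lemma hasFDerivAt_snd_apply (z : ℝ × (Fin n → ℝ)) (A : Fin n) :
    HasFDerivAt (fun z : ℝ × (Fin n → ℝ) ↦ z.2 A)
      ((ContinuousLinearMap.proj A).comp (ContinuousLinearMap.snd ℝ ℝ (Fin n → ℝ))) z :=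
  ((ContinuousLinearMap.proj A).comp (ContinuousLinearMap.snd ℝ ℝ (Fin n → ℝ))).hasFDerivAt

end Coordinates

section DefiningSystem

variable {n : ℕ} {Λt : ℝ → ℝ} {h : ℝ × (Fin n → ℝ) → ℝ}

local notation "𝐞" => ((1 : ℝ), (0 : Fin _ → ℝ))
local notation "𝐪[" B "]" => ((0 : ℝ), Pi.single B (1 : ℝ))

lemma fderiv_fderiv_single_single_eq_div (hh : ContDiff ℝ 2 h) (hΛ₀ : deriv Λt 0 ≠ 0)
    (hqe : ∀ p B, fderiv ℝ (fun z ↦ fderiv ℝ h z 𝐞) p 𝐪[B] = 0)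
    (hee : ∀ p B, fderiv ℝ (fun z ↦ fderiv ℝ h z 𝐞) p 𝐞 =
      deriv Λt p.1 * fderiv ℝ (fun z ↦ fderiv ℝ h z 𝐪[B]) p 𝐪[B])
    (p : ℝ × (Fin n → ℝ)) (B : Fin n) :
    fderiv ℝ (fun z ↦ fderiv ℝ h z 𝐪[B]) p 𝐪[B] =
      fderiv ℝ (fun z ↦ fderiv ℝ h z 𝐞) 0 𝐞 / deriv Λt 0 := by
  obtain ⟨e, q⟩ := p
  have hψ : fderiv ℝ (fun z ↦ fderiv ℝ h z 𝐞) (0, q) = fderiv ℝ (fun z ↦ fderiv ℝ h z 𝐞) 0 := by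
    have hinv : ∀ x, fderiv ℝ h (x + (0, q)) 𝐞 = fderiv ℝ h x 𝐞 := fun x ↦ by
      simpa using add_smul_eq_of_fderiv_apply_eq_zero (hh.differentiable_fderiv_apply 𝐞)
        (fun y ↦ ContinuousLinearMap.map_zero_prod_eq_zero (hqe y) q) x 1
    simpa using fderiv_add_eq_of_forall_add_eq (f := fun z ↦ fderiv ℝ h z 𝐞) hinv 0
  have hμ : fderiv ℝ (fun z ↦ fderiv ℝ h z 𝐪[B]) (e, q) =
      fderiv ℝ (fun z ↦ fderiv ℝ h z 𝐪[B]) (0, q) := by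
    have hinv : ∀ x, fderiv ℝ h (x + (e, 0)) 𝐪[B] = fderiv ℝ h x 𝐪[B] := fun x ↦ by
      simpa using add_smul_eq_of_fderiv_apply_eq_zero (hh.differentiable_fderiv_apply 𝐪[B])
        (fun y ↦ (hh.fderiv_fderiv_apply_comm y _ _).trans (hqe y B)) x e
    simpa using fderiv_add_eq_of_forall_add_eq (f := fun z ↦ fderiv ℝ h z 𝐪[B]) hinv (0, q)
  rw [hμ, eq_div_iff hΛ₀, mul_comm, ← hψ]
  exact (hee (0, q) B).symm

lemma exists_fderiv_apply_fst_eq [NeZero n] (hh : ContDiff ℝ 2 h) (hΛ : Differentiable ℝ Λt)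
    {κ : ℝ} (hκ : ∀ p B, fderiv ℝ (fun z ↦ fderiv ℝ h z 𝐪[B]) p 𝐪[B] = κ)
    (hqe : ∀ p B, fderiv ℝ (fun z ↦ fderiv ℝ h z 𝐞) p 𝐪[B] = 0)
    (hee : ∀ p B, fderiv ℝ (fun z ↦ fderiv ℝ h z 𝐞) p 𝐞 =
      deriv Λt p.1 * fderiv ℝ (fun z ↦ fderiv ℝ h z 𝐪[B]) p 𝐪[B]) :
    ∃ c, ∀ z, fderiv ℝ h z 𝐞 = κ * Λt z.1 + c := by
  refine exists_eq_add_of_fderiv_eq (hh.differentiable_fderiv_apply 𝐞) (by fun_prop) fun z ↦ ?_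
  have hg : HasFDerivAt (fun z : ℝ × (Fin n → ℝ) ↦ κ * Λt z.1)
      (κ • deriv Λt z.1 • ContinuousLinearMap.fst ℝ ℝ (Fin n → ℝ)) z :=
    ((hΛ z.1).hasDerivAt.comp_hasFDerivAt z hasFDerivAt_fst).const_mul κ
  rw [hg.fderiv]
  refine ContinuousLinearMap.ext_prod_single ?_ fun B ↦ ?_
  · simp [hee z 0, hκ, mul_comm]
  · simp [hqe]

lemma exists_fderiv_apply_single_eq (hh : ContDiff ℝ 2 h) {κ : ℝ}
    (hκ : ∀ p B, fderiv ℝ (fun z ↦ fderiv ℝ h z 𝐪[B]) p 𝐪[B] = κ)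
    (hqq : ∀ p A B, A ≠ B → fderiv ℝ (fun z ↦ fderiv ℝ h z 𝐪[B]) p 𝐪[A] = 0)
    (hqe : ∀ p B, fderiv ℝ (fun z ↦ fderiv ℝ h z 𝐞) p 𝐪[B] = 0) (B : Fin n) :
    ∃ β, ∀ z, fderiv ℝ h z 𝐪[B] = κ * z.2 B + β := by
  refine exists_eq_add_of_fderiv_eq (hh.differentiable_fderiv_apply 𝐪[B]) (by fun_prop)
    fun z ↦ ?_
  have hg : HasFDerivAt (fun z : ℝ × (Fin n → ℝ) ↦ κ * z.2 B)
      (κ • (ContinuousLinearMap.proj B).comp (ContinuousLinearMap.snd ℝ ℝ (Fin n → ℝ))) z :=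
    (hasFDerivAt_snd_apply z B).const_mul κ
  rw [hg.fderiv]
  refine ContinuousLinearMap.ext_prod_single ?_ fun A ↦ ?_
  · simpa [hh.fderiv_fderiv_apply_comm] using hqe z B
  · rcases eq_or_ne A B with rfl | hAB
    · simp [hκ]
    · simp [hqq z A B hAB, hAB]

lemma exists_eq_of_fderiv_apply_eq (hh : Differentiable ℝ h) (hΛ : Continuous Λt)
    {κ c : ℝ} {β : Fin n → ℝ} (he : ∀ z, fderiv ℝ h z 𝐞 = κ * Λt z.1 + c)
    (hq : ∀ B z, fderiv ℝ h z 𝐪[B] = κ * z.2 B + β B) :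
    ∃ d, ∀ e q, h (e, q) = κ * (∫ s in (0 : ℝ)..e, Λt s) + κ / 2 * ∑ A, q A ^ 2 + c * e +
      ∑ A, β A * q A + d := by
  set P : ℝ × (Fin n → ℝ) → ℝ := fun z ↦ κ * (∫ s in (0 : ℝ)..z.1, Λt s) +
    κ / 2 * ∑ A, z.2 A ^ 2 + c * z.1 + ∑ A, β A * z.2 A
  have hP : ∀ z, ∃ L : ℝ × (Fin n → ℝ) →L[ℝ] ℝ, HasFDerivAt P L z ∧
      L 𝐞 = κ * Λt z.1 + c ∧ ∀ B, L 𝐪[B] = κ * z.2 B + β B := fun z ↦ by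
    have hint := ((hΛ.integral_hasStrictDerivAt 0 z.1).hasDerivAt.comp_hasFDerivAt z
      (hasFDerivAt_fst (𝕜 := ℝ) (E := ℝ) (F := Fin n → ℝ))).const_mul κ
    have hsq := (HasFDerivAt.fun_sum (u := Finset.univ) fun A _ ↦
      (hasFDerivAt_snd_apply z A).pow 2).const_mul (κ / 2)
    have hlin := HasFDerivAt.fun_sum (u := Finset.univ) fun A _ ↦
      (hasFDerivAt_snd_apply z A).const_mul (β A)
    exact ⟨_, ((hint.fun_add hsq).fun_add (hasFDerivAt_fst.const_mul c)).fun_add hlin,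
      by simp, fun B ↦ by simp [Pi.single_apply]; ring⟩
  choose L hL hLe hLq using hP
  obtain ⟨d, hd⟩ := exists_eq_add_of_fderiv_eq hh (fun z ↦ (hL z).differentiableAt) fun z ↦ by
    rw [(hL z).fderiv]
    exact ContinuousLinearMap.ext_prod_single (by rw [he, hLe]) fun B ↦ by rw [hq, hLq]
  exact ⟨d, fun e q ↦ hd (e, q)⟩

end DefiningSystem

/-- classification of solutions of the defining system for the Cattaneo
system (constant relaxation time), in density variables `(ẽ, q) ∈ ℝ × ℝ³`.  If
`Λ̃' ≠ 0` everywhere and a C² function `h` satisfies `∂²h/∂q^A∂q^B = 0` (`A ≠ B`),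
`∂²h/∂q^B∂ẽ = 0`, and `∂²h/∂ẽ² = Λ̃'(ẽ) ∂²h/∂(q^B)²` for every `B`, then
`h(ẽ,q) = 2α ∫₀^{ẽ} Λ̃ + α‖q‖² + c ẽ + ⟨β, q⟩ + d` for some constants `α, c, d, β`. -/
theorem stmt_13 (Λt : ℝ → ℝ) (hΛ : ContDiff ℝ 1 Λt) (hΛ' : ∀ e : ℝ, deriv Λt e ≠ 0)
    (h : ℝ × (Fin 3 → ℝ) → ℝ) (hh : ContDiff ℝ 2 h)
    (hqq : ∀ (p : ℝ × (Fin 3 → ℝ)) (A B : Fin 3), A ≠ B →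
      fderiv ℝ (fun z => fderiv ℝ h z ((0 : ℝ), Pi.single B 1)) p ((0 : ℝ), Pi.single A 1)
        = 0)
    (hqe : ∀ (p : ℝ × (Fin 3 → ℝ)) (B : Fin 3),
      fderiv ℝ (fun z => fderiv ℝ h z ((1 : ℝ), (0 : Fin 3 → ℝ))) p
        ((0 : ℝ), Pi.single B 1) = 0)
    (hee : ∀ (p : ℝ × (Fin 3 → ℝ)) (B : Fin 3),
      fderiv ℝ (fun z => fderiv ℝ h z ((1 : ℝ), (0 : Fin 3 → ℝ))) p
          ((1 : ℝ), (0 : Fin 3 → ℝ)) =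
        deriv Λt p.1 *
          fderiv ℝ (fun z => fderiv ℝ h z ((0 : ℝ), Pi.single B 1)) p
            ((0 : ℝ), Pi.single B 1)) :
    ∃ (α c d : ℝ) (β : Fin 3 → ℝ), ∀ (e : ℝ) (q : Fin 3 → ℝ),
      h (e, q) = 2 * α * (∫ s in (0 : ℝ)..e, Λt s) + α * (∑ A, q A ^ 2) + c * e +
        (∑ A, β A * q A) + d := by
  obtain ⟨κ, hκ⟩ : ∃ κ, ∀ p B, fderiv ℝ (fun z ↦ fderiv ℝ h z ((0 : ℝ), Pi.single B 1)) p
      ((0 : ℝ), Pi.single B 1) = κ :=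
    ⟨_, fderiv_fderiv_single_single_eq_div hh (hΛ' 0) hqe hee⟩
  obtain ⟨c, hc⟩ := exists_fderiv_apply_fst_eq hh (hΛ.differentiable one_ne_zero) hκ hqe hee
  choose β hβ using exists_fderiv_apply_single_eq hh hκ hqq hqe
  obtain ⟨d, hd⟩ :=
    exists_eq_of_fderiv_apply_eq (hh.differentiable two_ne_zero) hΛ.continuous hc hβ
  refine ⟨κ / 2, c, d, β, fun e q ↦ ?_⟩
  rw [hd]
  ring
end

section
/- Let λ⁰ : ℝ × ℝ³ → ℝ be continuous and K^A : ℝ × ℝ³ → ℝ (A = 1, 2, 3; arguments (ϑ̃, q¹, q², q³)) be twice continuously differentiable, and suppose that for all (ϑ̃, q) and all A, B ∈ {1,2,3}: ∂K^A/∂q^B (ϑ̃, q) = δ^A_B · λ⁰(ϑ̃, q). Then λ⁰ does not depend on q, i.e. λ⁰(ϑ̃, q) = λ⁰(ϑ̃, 0) for all q, and there exist functions K̃^A : ℝ → ℝ such that K^A(ϑ̃, q) = λ⁰(ϑ̃, 0) · q^A + K̃^A(ϑ̃) for all (ϑ̃, q) and all A. -/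
/-!
Vanishing off-diagonal partials make `K^A` constant along every direction with zero `A`-th
coordinate, so `K^A(ϑ̃, q)` depends on `q` only through `q^A`, and therefore so does its
diagonal partial `λ⁰`. Doing this for two indices `A ≠ B` shows that `λ⁰` does not depend on
`q` at all; then `K^A` has constant derivative along `q`, hence is affine in `q^A`.
-/

section LineIntegration

variable {E F : Type*} [NormedAddCommGroup E] [NormedSpace ℝ E]
  [NormedAddCommGroup F] [NormedSpace ℝ F] {f : E → F}

theorem hasDerivAt_apply_add_smul (hf : Differentiable ℝ f) (x v : E) (t : ℝ) :
    HasDerivAt (fun s : ℝ => f (x + s • v)) (fderiv ℝ f (x + t • v) v) t := by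
  have hline : HasDerivAt (fun s : ℝ => x + s • v) v t := by
    simpa using ((hasDerivAt_id t).smul_const v).const_add x
  exact (hf _).hasFDerivAt.comp_hasDerivAt t hline

theorem apply_add_smul_of_fderiv_apply_eq (hf : Differentiable ℝ f) {v : E} {c : F}
    (h : ∀ y, fderiv ℝ f y v = c) (x : E) (t : ℝ) : f (x + t • v) = f x + t • c := by
  have hderiv (s : ℝ) : HasDerivAt (fun s : ℝ => f (x + s • v) - s • c) 0 s := by
    simpa [h] using (hasDerivAt_apply_add_smul hf x v s).fun_sub ((hasDerivAt_id s).smul_const c)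
  have := is_const_of_deriv_eq_zero (fun s => (hderiv s).differentiableAt)
    (fun s => (hderiv s).deriv) t 0
  simp only [zero_smul, add_zero, sub_zero] at this
  rw [← this, sub_add_cancel]

theorem fderiv_apply_eq_of_apply_add_smul_eq (hf : Differentiable ℝ f) {x y v : E}
    (h : ∀ s : ℝ, f (x + s • v) = f (y + s • v)) : fderiv ℝ f x v = fderiv ℝ f y v := by
  have hx := hasDerivAt_apply_add_smul hf x v 0
  have hy := hasDerivAt_apply_add_smul hf y v 0
  simp only [zero_smul, add_zero] at hx hy
  exact hx.unique (by simpa only [h] using hy)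

end LineIntegration

section PartialDerivatives

variable {ι : Type*} [Fintype ι] [DecidableEq ι] {f : (ι → ℝ) → ℝ} {l : (ι → ℝ) → ℝ} {A : ι}

theorem fderiv_apply_eq_mul_of_partial
    (h : ∀ x B, fderiv ℝ f x (Pi.single B 1) = if A = B then l x else 0) (x w : ι → ℝ) :
    fderiv ℝ f x w = w A * l x := by
  have hsingle (i : ι) : Pi.single i (w i) = w i • (Pi.single i 1 : ι → ℝ) := by
    rw [← Pi.single_smul', smul_eq_mul, mul_one]
  conv_lhs => rw [← Finset.univ_sum_single w]
  simp [hsingle, h]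

theorem apply_eq_apply_single_of_partial (hf : Differentiable ℝ f)
    (h : ∀ x B, fderiv ℝ f x (Pi.single B 1) = if A = B then l x else 0) (q : ι → ℝ) :
    f q = f (Pi.single A (q A)) := by
  have hdir (y : ι → ℝ) : fderiv ℝ f y (q - Pi.single A (q A)) = 0 := by
    simp [fderiv_apply_eq_mul_of_partial h]
  simpa using apply_add_smul_of_fderiv_apply_eq hf hdir (Pi.single A (q A)) 1

theorem partial_apply_eq_apply_single (hf : Differentiable ℝ f)
    (h : ∀ x B, fderiv ℝ f x (Pi.single B 1) = if A = B then l x else 0) (q : ι → ℝ) :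
    l q = l (Pi.single A (q A)) := by
  have hline (s : ℝ) : f (q + s • Pi.single A 1) = f (Pi.single A (q A) + s • Pi.single A 1) := by
    rw [apply_eq_apply_single_of_partial hf h, apply_eq_apply_single_of_partial hf h (_ + _)]
    simp
  simpa [h] using fderiv_apply_eq_of_apply_add_smul_eq hf hline

theorem eq_mul_add_of_fderiv_single_eq_ite [Nontrivial ι] {f : ι → (ι → ℝ) → ℝ}
    (hf : ∀ A, Differentiable ℝ (f A))
    (h : ∀ x A B, fderiv ℝ (f A) x (Pi.single B 1) = if A = B then l x else 0) :
    (∀ q, l q = l 0) ∧ ∀ q A, f A q = l 0 * q A + f A 0 := by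
  have hl (q : ι → ℝ) : l q = l 0 := by
    obtain ⟨A⟩ := ‹Nontrivial ι›.to_nonempty
    obtain ⟨B, hBA⟩ := exists_ne A
    calc l q = l (Pi.single A (q A)) := partial_apply_eq_apply_single (hf A) (h · A) q
      _ = l (Pi.single B ((Pi.single A (q A) : ι → ℝ) B)) :=
        partial_apply_eq_apply_single (hf B) (h · B) (Pi.single A (q A))
      _ = l 0 := by rw [Pi.single_eq_of_ne hBA, Pi.single_zero]
  refine ⟨hl, fun q A => ?_⟩
  have hdir (y : ι → ℝ) : fderiv ℝ (f A) y q = q A * l 0 := by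
    rw [fderiv_apply_eq_mul_of_partial (h · A), hl]
  simpa [add_comm, mul_comm] using apply_add_smul_of_fderiv_apply_eq (hf A) hdir 0 1

end PartialDerivatives

theorem fderiv_apply_prodMk_right {E F G : Type*} [NormedAddCommGroup E] [NormedSpace ℝ E]
    [NormedAddCommGroup F] [NormedSpace ℝ F] [NormedAddCommGroup G] [NormedSpace ℝ G]
    {K : E × F → G} (hK : Differentiable ℝ K) (x : E) (y w : F) :
    fderiv ℝ (fun y => K (x, y)) y w = fderiv ℝ K (x, y) (0, w) := by
  have hcomp : HasFDerivAt (fun y => K (x, y)) ((fderiv ℝ K (x, y)).comp (.inr ℝ E F)) y :=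
    (hK _).hasFDerivAt.comp y (hasFDerivAt_prodMk_right x y)
  rw [hcomp.fderiv]
  rfl

theorem stmt_17_general (lam0 : ℝ × (Fin 3 → ℝ) → ℝ)
    (K : Fin 3 → ℝ × (Fin 3 → ℝ) → ℝ) (hK : ∀ A, ContDiff ℝ 2 (K A))
    (hgrad : ∀ (p : ℝ × (Fin 3 → ℝ)) (A B : Fin 3),
      fderiv ℝ (K A) p ((0 : ℝ), Pi.single B 1) = if A = B then lam0 p else 0) :
    (∀ (ϑ : ℝ) (q : Fin 3 → ℝ), lam0 (ϑ, q) = lam0 (ϑ, 0)) ∧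
      ∃ Kt : Fin 3 → ℝ → ℝ, ∀ (ϑ : ℝ) (q : Fin 3 → ℝ) (A : Fin 3),
        K A (ϑ, q) = lam0 (ϑ, 0) * q A + Kt A ϑ := by
  have hKd (A : Fin 3) : Differentiable ℝ (K A) := (hK A).differentiable (by norm_num)
  have hslice (ϑ : ℝ) := eq_mul_add_of_fderiv_single_eq_ite (l := fun q => lam0 (ϑ, q))
    (f := fun A q => K A (ϑ, q)) (fun A => by fun_prop)
    (fun q A B => by rw [fderiv_apply_prodMk_right (hKd A), hgrad])
  exact ⟨fun ϑ => (hslice ϑ).1, fun A ϑ => K A (ϑ, 0), fun ϑ => (hslice ϑ).2⟩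

/-- the spatial-flux subsystem of the Lagrange–Liu system for the
Cattaneo system.  If `∂K^A/∂q^B = δ^A_B λ⁰` at every point `(ϑ̃, q) ∈ ℝ × ℝ³`, then
`λ⁰` does not depend on `q` and `K^A(ϑ̃, q) = λ⁰(ϑ̃, 0) q^A + K̃^A(ϑ̃)` for some
functions `K̃^A` of `ϑ̃` alone. -/
theorem stmt_17 (lam0 : ℝ × (Fin 3 → ℝ) → ℝ) (hlam0 : Continuous lam0)
    (K : Fin 3 → ℝ × (Fin 3 → ℝ) → ℝ) (hK : ∀ A, ContDiff ℝ 2 (K A))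
    (hgrad : ∀ (p : ℝ × (Fin 3 → ℝ)) (A B : Fin 3),
      fderiv ℝ (K A) p ((0 : ℝ), Pi.single B 1) = if A = B then lam0 p else 0) :
    (∀ (ϑ : ℝ) (q : Fin 3 → ℝ), lam0 (ϑ, q) = lam0 (ϑ, 0)) ∧
      ∃ Kt : Fin 3 → ℝ → ℝ, ∀ (ϑ : ℝ) (q : Fin 3 → ℝ) (A : Fin 3),
        K A (ϑ, q) = lam0 (ϑ, 0) * q A + Kt A ϑ :=
  stmt_17_general lam0 K hK hgrad
end

section
/- Let ℓ ∈ ℝ with ℓ ≠ 0, and define three linear maps L₁, L₂, L₃ : ℝ⁴ → ℝ⁴ (coordinates ζ = (ζ₀, ζ₁, ζ₂, ζ₃)) by L₁ζ = (ℓζ₁, ζ₀, 0, 0), L₂ζ = (ℓζ₂, 0, ζ₀, 0), L₃ζ = (ℓζ₃, 0, 0, ζ₀). Then: (1) ker L₁ ∩ ker L₂ ∩ ker L₃ = {0}; and (2) there is no nonzero ζ ∈ ℝ⁴ that is simultaneously an eigenvector of L₁, L₂, and L₃ (i.e. no ζ ≠ 0 with L_Aζ = μ_A ζ for some μ_A ∈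 ℝ, A = 1,2,3). -/
/-- The transposed flux Jacobians of the Cattaneo heat propagation system:
for `A ∈ {1,2,3}` (indexed by `Fin 3`, with `A.succ ∈ Fin 4` the corresponding
coordinate), `(L_A ζ)₀ = ℓ ζ_{A}`, `(L_A ζ)_{A} = ζ₀`, all other components zero;
i.e. `L₁ζ = (ℓζ₁, ζ₀, 0, 0)`, `L₂ζ = (ℓζ₂, 0, ζ₀, 0)`, `L₃ζ = (ℓζ₃, 0, 0, ζ₀)`. -/
def cattaneoL (ℓ : ℝ) (A : Fin 3) (ζ : Fin 4 → ℝ) : Fin 4 → ℝ :=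
  fun j => if j = 0 then ℓ * ζ A.succ else if j = A.succ then ζ 0 else 0

/-- for `ℓ ≠ 0`, (1) the kernels of `L₁, L₂, L₃` intersect trivially
(ellipticity of the defining system of the Cattaneo system), and (2) no nonzero
`ζ ∈ ℝ⁴` is a common eigenvector of `L₁, L₂, L₃` (holonomicity: the characteristic
variety is the zero section). -/
theorem stmt_19 (ℓ : ℝ) (hℓ : ℓ ≠ 0) :
    (∀ ζ : Fin 4 → ℝ, (∀ A : Fin 3, cattaneoL ℓ A ζ = 0) → ζ = 0) ∧
      ¬ ∃ ζ : Fin 4 → ℝ, ζ ≠ 0 ∧ ∀ A : Fin 3, ∃ μ : ℝ, cattaneoL ℓ A ζ = μ • ζ := by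
  constructor
  · intro ζ h
    have h0 := congrFun (h 0) 0
    have h1 := congrFun (h 0) 1
    have h2 := congrFun (h 1) 0
    have h3 := congrFun (h 2) 0
    simp [cattaneoL, Fin.succ] at h0 h1 h2 h3
    funext j
    fin_cases j
    · exact h1
    · simpa [hℓ] using h0
    · simpa [hℓ] using h2
    · simpa [hℓ] using h3
  · rintro ⟨ζ, hζ, h⟩
    obtain ⟨μ0, h0⟩ := h 0
    obtain ⟨μ1, h1⟩ := h 1
    obtain ⟨μ2, h2⟩ := h 2
    have a0 := congrFun h0 0
    have a1 := congrFun h0 1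
    have b0 := congrFun h1 0
    have b1 := congrFun h1 1
    have b2 := congrFun h1 2
    have c0 := congrFun h2 0
    simp [cattaneoL, Fin.succ] at a0 a1 b0 b1 b2 c0
    by_cases hz : ζ 0 = 0
    · apply hζ
      funext j
      fin_cases j
      · exact hz
      · have : ℓ * ζ 1 = 0 := by rw [a0, hz]; ring
        simpa [hℓ] using this
      · have : ℓ * ζ 2 = 0 := by rw [b0, hz]; ring
        simpa [hℓ] using this
      · have : ℓ * ζ 3 = 0 := by rw [c0, hz]; ring
        simpa [hℓ] using this
    · have hμ1 : μ1 ≠ 0 := by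
        intro hm
        rw [hm] at b2
        simp at b2
        exact hz b2
      have hζ1 : ζ 1 = 0 := by
        rcases b1 with hm | hv
        · exact absurd hm hμ1
        · exact hv
      rw [hζ1, mul_zero] at a1
      exact hz a1
end
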